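/- The map g ↦ D(g) = ∑_{h∈G} S_h S_{gh}* is injective (the representation is faithful): if D(g) = Id then g = e. -/

import Mathlib

/-!
Since the isometries have pairwise orthogonal ranges, the series defining `D(g) (S_k x)`
collapses to its single term `S_{g⁻¹k} x`. With `k = e`, `D(g) = Id` gives `S_e x = S_{g⁻¹} x`
for some `x ≠ 0`, and applying `S_e*` to both sides forces `g⁻¹ = e`.
-/

open ContinuousLinearMap

section OrthogonalIsometries

variable {𝕜 H ι : Type*} [RCLike 𝕜] [NormedAddCommGroup H] [InnerProductSpace 𝕜 H]
  [CompleteSpace H] {S : ι → H →L[𝕜] H}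

theorem adjoint_apply_apply_eq_ite [DecidableEq ι] (hiso : ∀ i, adjoint (S i) ∘L S i = 1)
    (horth : ∀ i j, i ≠ j → adjoint (S i) ∘L S j = 0) (i j : ι) (x : H) :
    adjoint (S i) (S j x) = if i = j then x else 0 := by
  split_ifs with hij
  · subst hij
    simpa using DFunLike.congr_fun (hiso i) x
  · simpa using DFunLike.congr_fun (horth i j hij) x

theorem index_eq_of_apply_eq_apply (hiso : ∀ i, adjoint (S i) ∘L S i = 1)
    (horth : ∀ i j, i ≠ j → adjoint (S i) ∘L S j = 0) {i j : ι} {x : H} (hx : x ≠ 0)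
    (h : S i x = S j x) : i = j := by
  classical
  have hx' := adjoint_apply_apply_eq_ite hiso horth i j x
  rw [← h, adjoint_apply_apply_eq_ite hiso horth, if_pos rfl] at hx'
  by_contra hij
  exact hx (by simpa [hij] using hx')

end OrthogonalIsometries

theorem hasSum_apply_adjoint_mul_apply {𝕜 H G : Type*} [RCLike 𝕜] [NormedAddCommGroup H]
    [InnerProductSpace 𝕜 H] [CompleteSpace H] [Group G] {S : G → H →L[𝕜] H}
    (hiso : ∀ h, adjoint (S h) ∘L S h = 1) (horth : ∀ h k, h ≠ k → adjoint (S h) ∘L S k = 0)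
    (g k : G) (x : H) :
    HasSum (fun h : G => S h (adjoint (S (g * h)) (S k x))) (S (g⁻¹ * k) x) := by
  classical
  convert hasSum_ite_eq (g⁻¹ * k) (S (g⁻¹ * k) x) using 1
  funext h
  simp_rw [adjoint_apply_apply_eq_ite hiso horth, ← eq_inv_mul_iff_mul_eq]
  split_ifs with hh
  · rw [hh]
  · exact map_zero _

theorem JS_group_faithful_general
    {H : Type*} [NormedAddCommGroup H] [InnerProductSpace ℂ H] [CompleteSpace H]
    [Nontrivial H]
    {G : Type*} [Group G]
    (S : G → H →L[ℂ] H)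
    (hiso : ∀ h, adjoint (S h) ∘L S h = 1)
    (horth : ∀ h k, h ≠ k → adjoint (S h) ∘L S k = 0)
    (D : G → H →L[ℂ] H)
    (hD : ∀ (g : G) (x : H), HasSum (fun h : G => S h (adjoint (S (g * h)) x)) (D g x)) :
    ∀ g : G, D g = 1 → g = 1 := by
  intro g hg
  obtain ⟨x, hx⟩ := exists_ne (0 : H)
  have hDS : D g (S 1 x) = S g⁻¹ x := by
    simpa using (hD g (S 1 x)).unique (hasSum_apply_adjoint_mul_apply hiso horth g 1 x)
  rw [hg, one_apply_eq_self] at hDS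
  simpa using (index_eq_of_apply_eq_apply hiso horth hx hDS).symm

/-- The representation `g ↦ D(g) = ∑_h S_h S_{gh}*` is faithful: if `D(g) = Id`
then `g = e`. -/
theorem JS_group_faithful
    {H : Type*} [NormedAddCommGroup H] [InnerProductSpace ℂ H] [CompleteSpace H]
    [Nontrivial H]
    {G : Type*} [Group G] [Countable G]
    (S : G → H →L[ℂ] H)
    (hiso : ∀ h, adjoint (S h) ∘L S h = 1)
    (horth : ∀ h k, h ≠ k → adjoint (S h) ∘L S k = 0)
    (hsum : ∀ x : H, HasSum (fun h : G => S h (adjoint (S h) x)) x)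
    (D : G → H →L[ℂ] H)
    (hD : ∀ (g : G) (x : H), HasSum (fun h : G => S h (adjoint (S (g * h)) x)) (D g x)) :
    ∀ g : G, D g = 1 → g = 1 :=
  JS_group_faithful_general S hiso horth D hD
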